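/- Assume m ≥ 2. Then for every z ∈ ℂ, D(z) = Σ_{j=1}^{n} m·φ_j·λ_j·z^{m−2}·∏_{ℓ≠j}(z^m − λ_ℓ^m). -/

import Mathlib

open Matrix BigOperators

noncomputable section

/-- The block matrix `L̃` with diagonal blocks `Λ = diag(λ₁,…,λₙ)` at positions `(h, h+1)`:
its entry in row `(h,j)` and column `(i,k)` is `λⱼ` if `k = j` and `i = h + 1` in `ℤ/mℤ`,
and `0` otherwise. -/
def Ltilde (m n : ℕ) (lam : Fin n → ℂ) :
    Matrix (ZMod m × Fin n) (ZMod m × Fin n) ℂ :=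
  Matrix.of fun p q => if q.2 = p.2 ∧ q.1 = p.1 + 1 then lam p.2 else 0

/-- `|g| = g₀ + g₁ + ⋯ + g_{m-1}`. -/
def gAbs (m : ℕ) (g : ZMod m → ℂ) : ℂ :=
  ∑ s ∈ Finset.range m, g (s : ZMod m)

/-- `cᵢ = Σ_{r=0}^{i} g_r − Σ_{s=0}^{m−1} ((m−s)/m)·g_s`, the index `i` read modulo `m`. -/
def cConst (m : ℕ) (g : ZMod m → ℂ) (i : ZMod m) : ℂ :=
  (∑ r ∈ Finset.range (i.val + 1), g (r : ZMod m)) -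
    ∑ s ∈ Finset.range m, (((m : ℂ) - (s : ℂ)) / (m : ℂ)) * g (s : ZMod m)

/-- The spin matrix `Q̃` built from `V i = ṽᵢ·w̃ᵢ`: its entry in row `(h,j)` and column `(i,k)`
vanishes unless `h = i + 1` in `ℤ/mℤ`, in which case (taking the representative
`i ∈ {0,…,m−1}`) it equals
`φⱼ + (1/λⱼ)·(cᵢ + Σ_{r=0}^{i}(V_r)ⱼⱼ − Σ_{s=0}^{m−1}((m−s)/m)·(V_s)ⱼⱼ)` if `k = j`, and
`−Σ_{h′=0}^{m−1}(V_{i−h′})ⱼₖ·λⱼ^{m−h′−1}·λₖ^{h′}/(λⱼ^m − λₖ^m)` if `k ≠ j`. -/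
def QtildeS (m n : ℕ) (g : ZMod m → ℂ) (lam phi : Fin n → ℂ)
    (V : ZMod m → Matrix (Fin n) (Fin n) ℂ) :
    Matrix (ZMod m × Fin n) (ZMod m × Fin n) ℂ :=
  Matrix.of fun p q =>
    if p.1 = q.1 + 1 then
      if q.2 = p.2 then
        phi p.2 + (1 / lam p.2) *
          (cConst m g q.1 + (∑ r ∈ Finset.range (q.1.val + 1), (V (r : ZMod m)) p.2 p.2) -
            ∑ s ∈ Finset.range m, (((m : ℂ) - (s : ℂ)) / (m : ℂ)) * (V (s : ZMod m)) p.2 p.2)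
      else
        -∑ h' ∈ Finset.range m,
          (V (q.1 - (h' : ZMod m))) p.2 q.2 * lam p.2 ^ (m - h' - 1) * lam q.2 ^ h' /
            (lam p.2 ^ m - lam q.2 ^ m)
    else 0

/-- `A(z) = det(z·1 − L̃)`. -/
def Afun (m n : ℕ) [NeZero m] (lam : Fin n → ℂ) (z : ℂ) : ℂ :=
  (z • (1 : Matrix (ZMod m × Fin n) (ZMod m × Fin n) ℂ) - Ltilde m n lam).det

/-- `D(z) = tr(Q̃ · adj(z·1 − L̃))` (spin case). -/
def DfunS (m n : ℕ) [NeZero m] (g : ZMod m → ℂ) (lam phi : Fin n → ℂ)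
    (V : ZMod m → Matrix (Fin n) (Fin n) ℂ) (z : ℂ) : ℂ :=
  Matrix.trace (QtildeS m n g lam phi V *
    (z • (1 : Matrix (ZMod m × Fin n) (ZMod m × Fin n) ℂ) - Ltilde m n lam).adjugate)

/-- The block-diagonal matrix `B` with entry `(V_h)ⱼₖ` in row `(h,j)` and column `(h,k)`,
and `0` in positions with differing first indices. -/
def Bmat (m n : ℕ) (V : ZMod m → Matrix (Fin n) (Fin n) ℂ) :
    Matrix (ZMod m × Fin n) (ZMod m × Fin n) ℂ :=
  Matrix.of fun p q => if p.1 = q.1 then (V p.1) p.2 q.2 else 0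

/-- `C(z) = tr(Q̃ · adj(z·1 − L̃) · B)` (spin case). -/
def CfunS (m n : ℕ) [NeZero m] (g : ZMod m → ℂ) (lam phi : Fin n → ℂ)
    (V : ZMod m → Matrix (Fin n) (Fin n) ℂ) (z : ℂ) : ℂ :=
  Matrix.trace (QtildeS m n g lam phi V *
    (z • (1 : Matrix (ZMod m × Fin n) (ZMod m × Fin n) ℂ) - Ltilde m n lam).adjugate *
    Bmat m n V)

/-!
`z • 1 - L̃` is block diagonal with one block `z • 1 - λⱼ • S` for each `j`,
where `S` is the cyclic shift of `ℤ/mℤ`. As `S ^ m = 1`, multiplying `z • 1 - λ • S` by the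
geometric sum `∑ (λ • S) ^ i * (z • 1) ^ (m - 1 - i)` gives `(z ^ m - λ ^ m) • 1`, and in the
Leibniz expansion of `det (z • 1 - λ • S)` only the identity and the backward rotation survive,
so this determinant is `z ^ m - λ ^ m`. Hence, away from the roots of `∏ⱼ (z ^ m - λⱼ ^ m)` and
then by continuity everywhere, the adjugate is block diagonal with blocks
`(∏_{l ≠ j} (z ^ m - λ_l ^ m)) • (geometric sum)`. The trace against `Q̃` then only sees the
entries of `Q̃` at `(h, j), (h - 1, j)`, each paired with the entry `λⱼ z ^ (m - 2)` of the
geometric sum; the constants `cᵢ` are centred so that the `1 / λⱼ` corrections sum to zero over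
`h`, which leaves `m φⱼ`.
-/

section CyclicShift

variable {m : ℕ} [NeZero m] {R : Type*} [CommRing R]

def shiftMatrix (m : ℕ) (R : Type*) [Zero R] [One R] : Matrix (ZMod m) (ZMod m) R :=
  Matrix.of fun h i => if i = h + 1 then 1 else 0

lemma shiftMatrix_pow_apply (k : ℕ) (h i : ZMod m) :
    (shiftMatrix m R ^ k) h i = if i = h + k then 1 else 0 := by
  induction k generalizing h with
  | zero => simp [Matrix.one_apply, eq_comm]
  | succ k ih =>
    rw [pow_succ', Matrix.mul_apply]
    simp only [shiftMatrix, Matrix.of_apply, ite_mul, one_mul, zero_mul, Finset.sum_ite_eq',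
      Finset.mem_univ, if_true]
    rw [← shiftMatrix, ih]
    push_cast
    simp only [add_assoc, add_comm (1 : ZMod m)]

lemma shiftMatrix_pow_self : shiftMatrix m R ^ m = 1 := by
  ext h i
  simp [shiftMatrix_pow_apply, Matrix.one_apply, eq_comm]

lemma sign_subRight_one : Equiv.Perm.sign (Equiv.subRight (1 : ZMod m)) = (-1) ^ (m - 1) := by
  obtain ⟨k, rfl⟩ : ∃ k, m = k + 1 := Nat.exists_eq_succ_of_ne_zero (NeZero.ne m)
  show Equiv.Perm.sign (Equiv.subRight (1 : Fin (k + 1))) = _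
  have : Equiv.subRight (1 : Fin (k + 1)) = (finRotate (k + 1))⁻¹ := by
    refine Equiv.ext fun i => ?_
    rw [Equiv.Perm.eq_inv_iff_eq, finRotate_apply]
    simp
  rw [this, Equiv.Perm.sign_inv, sign_finRotate]

lemma Equiv.Perm.eq_one_or_eq_subRight_one (σ : Equiv.Perm (ZMod m))
    (hσ : ∀ i, σ i = i ∨ σ i = i - 1) : σ = 1 ∨ σ = Equiv.subRight 1 := by
  by_cases hfix : ∃ i₀, σ i₀ = i₀
  · left
    obtain ⟨i₀, hi₀⟩ := hfix
    have hfix_add : ∀ k : ℕ, σ (i₀ + k) = i₀ + k := by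
      intro k
      induction k with
      | zero => simpa using hi₀
      | succ k ih =>
        rcases hσ (i₀ + (k + 1 : ℕ)) with hk | hk
        · exact hk
        · rw [show i₀ + ((k + 1 : ℕ) : ZMod m) - 1 = i₀ + k by push_cast; ring] at hk
          rw [hk, σ.injective (hk.trans ih.symm)]
    ext i
    simpa [ZMod.natCast_zmod_val] using hfix_add (i - i₀).val
  · push Not at hfix
    exact Or.inr (Equiv.ext fun i => (hσ i).resolve_left (hfix i))

lemma det_smul_one_sub_smul_shiftMatrix (hm : 1 < m) (a z : R) :
    (z • (1 : Matrix (ZMod m) (ZMod m) R) - a • shiftMatrix m R).det = z ^ m - a ^ m := by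
  have : Fact (1 < m) := ⟨hm⟩
  have hentry : ∀ h i : ZMod m, (z • (1 : Matrix (ZMod m) (ZMod m) R) - a • shiftMatrix m R) h i
      = (if h = i then z else 0) - if i = h + 1 then a else 0 := by
    intro h i
    simp [shiftMatrix, Matrix.one_apply]
  have hne : (1 : Equiv.Perm (ZMod m)) ≠ Equiv.subRight 1 := fun h => by
    simpa using congr($h 0)
  rw [Matrix.det_apply, Fintype.sum_eq_add 1 (Equiv.subRight 1) hne]
  · obtain ⟨k, rfl⟩ : ∃ k, m = k + 1 := ⟨m - 1, by omega⟩
    have hsq : ((-1 : R) ^ k) ^ 2 = 1 := by rw [← pow_mul, pow_mul']; simp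
    simp [hentry, sign_subRight_one, Finset.prod_const, ZMod.card, Units.smul_def]
    linear_combination (-(a * a ^ k)) * hsq
  · rintro σ ⟨hσ₁, hσ₂⟩
    obtain ⟨i, hi₁, hi₂⟩ : ∃ i, σ i ≠ i ∧ σ i ≠ i - 1 := by
      by_contra! h
      exact (Equiv.Perm.eq_one_or_eq_subRight_one σ fun i => or_iff_not_imp_left.2 (h i)).elim
        hσ₁ hσ₂
    rw [Finset.prod_eq_zero (Finset.mem_univ i), smul_zero]
    rw [hentry, if_neg hi₁, if_neg fun h => hi₂ (eq_sub_of_add_eq h.symm), sub_zero]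

variable (m) in
def shiftGeomSum (a z : R) : Matrix (ZMod m) (ZMod m) R :=
  ∑ i ∈ Finset.range m, (a • shiftMatrix m R) ^ i * (z • 1) ^ (m - 1 - i)

lemma smul_one_sub_smul_shiftMatrix_mul_shiftGeomSum (a z : R) :
    (z • 1 - a • shiftMatrix m R) * shiftGeomSum m a z = (z ^ m - a ^ m) • 1 := by
  have hc : Commute (z • (1 : Matrix (ZMod m) (ZMod m) R)) (a • shiftMatrix m R) :=
    (Commute.one_left _).smul_left z
  rw [shiftGeomSum, ← hc.geom_sum₂_comm, hc.mul_geom_sum₂, smul_pow, smul_pow,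
    shiftMatrix_pow_self, one_pow, sub_smul]

lemma shiftGeomSum_apply_sub_one_self (hm : 1 < m) (a z : R) (h : ZMod m) :
    shiftGeomSum m a z (h - 1) h = a * z ^ (m - 2) := by
  have : Fact (1 < m) := ⟨hm⟩
  simp only [shiftGeomSum, Matrix.sum_apply, smul_pow, one_pow, Matrix.mul_smul,
    Matrix.mul_one, Matrix.smul_apply, shiftMatrix_pow_apply, smul_eq_mul]
  rw [Finset.sum_eq_single_of_mem 1 (Finset.mem_range.2 hm)]
  · simp [show m - 1 - 1 = m - 2 by omega, mul_comm]
  · intro k hk hk1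
    have hk_cast : (k : ZMod m) ≠ 1 := fun h =>
      hk1 (by simpa [ZMod.val_natCast_of_lt (Finset.mem_range.1 hk), ZMod.val_one] using
        congrArg ZMod.val h)
    have hne : h ≠ h - 1 + k := fun hh => hk_cast (by linear_combination -hh)
    simp [hne]

end CyclicShift

lemma Matrix.adjugate_eq_of_mul_eq_det_smul {ι K : Type*} [Fintype ι] [DecidableEq ι] [CommRing K]
    [IsDomain K] {A B : Matrix ι ι K} (hdet : A.det ≠ 0) (h : A * B = A.det • 1) :
    A.adjugate = B := by
  have h' := congrArg (A.adjugate * ·) h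
  simp only [← Matrix.mul_assoc, Matrix.adjugate_mul, Matrix.smul_mul, Matrix.one_mul,
    Matrix.mul_smul, Matrix.mul_one] at h'
  exact (smul_right_injective _ hdet h').symm

lemma Continuous.ext_of_eval_ne_zero {𝕜 X : Type*} [NontriviallyNormedField 𝕜] [CompleteSpace 𝕜]
    [TopologicalSpace X] [T2Space X] {f g : 𝕜 → X} (hf : Continuous f) (hg : Continuous g)
    {p : Polynomial 𝕜} (hp : p ≠ 0) (h : ∀ z, p.eval z ≠ 0 → f z = g z) : f = g :=
  hf.ext_on ((Polynomial.finite_setOfPred_isRoot hp).countable.dense_compl 𝕜) hg fun z hz => h z hz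

lemma smul_one_sub_Ltilde {m n : ℕ} (lam : Fin n → ℂ) (z : ℂ) :
    z • 1 - Ltilde m n lam = Matrix.blockDiagonal fun j => z • 1 - lam j • shiftMatrix m ℂ := by
  ext ⟨h, j⟩ ⟨i, k⟩
  by_cases hjk : j = k
  · subst hjk
    simp [Ltilde, shiftMatrix, Matrix.one_apply, Matrix.blockDiagonal_apply]
  · simp [Ltilde, Matrix.blockDiagonal_apply, hjk, Ne.symm hjk]

section Ltilde

variable {m n : ℕ} [NeZero m] (lam : Fin n → ℂ) (z : ℂ)

variable (m) in
def LtildeAdj : Matrix (ZMod m × Fin n) (ZMod m × Fin n) ℂ :=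
  Matrix.blockDiagonal fun j =>
    (∏ l ∈ Finset.univ.erase j, (z ^ m - lam l ^ m)) • shiftGeomSum m (lam j) z

lemma det_smul_one_sub_Ltilde (hm : 1 < m) :
    (z • 1 - Ltilde m n lam).det = ∏ j, (z ^ m - lam j ^ m) := by
  simp_rw [smul_one_sub_Ltilde, Matrix.det_blockDiagonal, det_smul_one_sub_smul_shiftMatrix hm]

lemma smul_one_sub_Ltilde_mul_LtildeAdj :
    (z • 1 - Ltilde m n lam) * LtildeAdj m lam z = (∏ j, (z ^ m - lam j ^ m)) • 1 := by
  rw [smul_one_sub_Ltilde, LtildeAdj, ← Matrix.blockDiagonal_mul]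
  simp_rw [Matrix.mul_smul, smul_one_sub_smul_shiftMatrix_mul_shiftGeomSum, smul_smul,
    Finset.prod_erase_mul _ _ (Finset.mem_univ _)]
  exact (Matrix.blockDiagonal_smul (∏ l, (z ^ m - lam l ^ m))
    (1 : Fin n → Matrix (ZMod m) (ZMod m) ℂ)).trans (congrArg _ Matrix.blockDiagonal_one)

lemma adjugate_smul_one_sub_Ltilde (hm : 1 < m) :
    (z • 1 - Ltilde m n lam).adjugate = LtildeAdj m lam z := by
  let p : Polynomial ℂ := ∏ j, (Polynomial.X ^ m - Polynomial.C (lam j ^ m))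
  have hp : p ≠ 0 := (Polynomial.monic_prod_of_monic _ _ fun j _ =>
    Polynomial.monic_X_pow_sub_C _ (NeZero.ne m)).ne_zero
  have hcont : Continuous (LtildeAdj m lam) := by
    unfold LtildeAdj shiftGeomSum
    fun_prop
  refine congrFun (Continuous.ext_of_eval_ne_zero
    (f := fun w => (w • 1 - Ltilde m n lam).adjugate) (by fun_prop) hcont hp fun w hw => ?_) z
  have hdet := det_smul_one_sub_Ltilde lam w hm
  simp only [p, Polynomial.eval_prod, Polynomial.eval_sub, Polynomial.eval_pow, Polynomial.eval_X,
    Polynomial.eval_C, ← hdet] at hw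
  exact Matrix.adjugate_eq_of_mul_eq_det_smul hw
    (hdet ▸ smul_one_sub_Ltilde_mul_LtildeAdj lam w)

end Ltilde

lemma Finset.sum_range_sum_range_succ {M : Type*} [AddCommMonoid M] (a : ℕ → M) (N : ℕ) :
    ∑ i ∈ Finset.range N, ∑ r ∈ Finset.range (i + 1), a r
      = ∑ r ∈ Finset.range N, (N - r) • a r := by
  induction N with
  | zero => simp
  | succ N ih =>
    have hsucc : ∀ r ∈ Finset.range N, (N + 1 - r) • a r = (N - r) • a r + a r := fun r hr => by
      rw [Nat.sub_add_comm (Finset.mem_range.1 hr).le, succ_nsmul]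
    rw [Finset.sum_range_succ (fun i => ∑ r ∈ Finset.range (i + 1), a r), ih,
      Finset.sum_range_succ (fun r => (N + 1 - r) • a r), Finset.sum_congr rfl hsucc,
      Finset.sum_add_distrib, Finset.sum_range_succ a, Nat.add_sub_cancel_left, one_smul,
      add_assoc]

section CenteredPartialSum

variable {K : Type*} [Field K] [CharZero K] {m : ℕ} [NeZero m]

variable (m) in
def centeredPartialSum (a : ℕ → K) (i : ZMod m) : K :=
  ∑ r ∈ Finset.range (i.val + 1), a r - ∑ s ∈ Finset.range m, ((m - s) / m : K) * a s

lemma sum_centeredPartialSum (a : ℕ → K) : ∑ i : ZMod m, centeredPartialSum m a i = 0 := by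
  have hm : (m : K) ≠ 0 := Nat.cast_ne_zero.2 (NeZero.ne m)
  have hval : ∑ i : ZMod m, ∑ r ∈ Finset.range (i.val + 1), a r
      = ∑ t ∈ Finset.range m, ∑ r ∈ Finset.range (t + 1), a r := by
    obtain ⟨k, rfl⟩ : ∃ k, m = k + 1 := Nat.exists_eq_succ_of_ne_zero (NeZero.ne m)
    exact Fin.sum_univ_eq_sum_range (fun t => ∑ r ∈ Finset.range (t + 1), a r) (k + 1)
  unfold centeredPartialSum
  rw [Finset.sum_sub_distrib, hval, Finset.sum_range_sum_range_succ, Finset.sum_const,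
    Finset.card_univ, ZMod.card, nsmul_eq_mul, Finset.mul_sum, sub_eq_zero]
  refine Finset.sum_congr rfl fun r hr => ?_
  rw [nsmul_eq_mul, Nat.cast_sub (Finset.mem_range.1 hr).le, ← mul_assoc, mul_div_cancel₀ _ hm]

lemma sum_centeredPartialSum_sub_one (a : ℕ → K) :
    ∑ h : ZMod m, centeredPartialSum m a (h - 1) = 0 :=
  ((Equiv.subRight 1).sum_comp (centeredPartialSum m a)).trans (sum_centeredPartialSum a)

end CenteredPartialSum

section QtildeS

variable {m n : ℕ} (g : ZMod m → ℂ) (lam phi : Fin n → ℂ)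
  (V : ZMod m → Matrix (Fin n) (Fin n) ℂ)

lemma QtildeS_apply_self_sub_one (h : ZMod m) (j : Fin n) :
    QtildeS m n g lam phi V (h, j) (h - 1, j)
      = phi j + (1 / lam j) * centeredPartialSum m (fun r => g r + V r j j) (h - 1) := by
  simp only [QtildeS, cConst, centeredPartialSum, Matrix.of_apply, sub_add_cancel, if_true,
    Finset.sum_add_distrib, mul_add]
  ring

lemma QtildeS_mul_blockDiagonal_apply_self [NeZero m] (B : Fin n → Matrix (ZMod m) (ZMod m) ℂ)
    (h : ZMod m) (j : Fin n) :
    (QtildeS m n g lam phi V * Matrix.blockDiagonal B) (h, j) (h, j)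
      = QtildeS m n g lam phi V (h, j) (h - 1, j) * B j (h - 1) h := by
  rw [Matrix.mul_apply, Fintype.sum_eq_single (h - 1, j)]
  · simp [Matrix.blockDiagonal_apply]
  · rintro ⟨i, k⟩ hik
    by_cases hhi : h = i + 1
    · have hkj : k ≠ j := fun hkj => hik (by rw [hhi, hkj, add_sub_cancel_right])
      simp [Matrix.blockDiagonal_apply, hkj]
    · simp [QtildeS, hhi]

lemma trace_QtildeS_mul_LtildeAdj [NeZero m] (hm : 1 < m) (z : ℂ) :
    (QtildeS m n g lam phi V * LtildeAdj m lam z).trace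
      = ∑ j, (m : ℂ) * phi j * lam j * z ^ (m - 2) *
          ∏ l ∈ Finset.univ.erase j, (z ^ m - lam l ^ m) := by
  simp only [Matrix.trace, Matrix.diag, LtildeAdj, Fintype.sum_prod_type_right,
    QtildeS_mul_blockDiagonal_apply_self, QtildeS_apply_self_sub_one, Matrix.smul_apply,
    shiftGeomSum_apply_sub_one_self hm, smul_eq_mul, ← Finset.sum_mul, Finset.sum_add_distrib,
    ← Finset.mul_sum, sum_centeredPartialSum_sub_one, Finset.sum_const, Finset.card_univ,
    ZMod.card, nsmul_eq_mul]
  refine Finset.sum_congr rfl fun j _ => ?_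
  ring

end QtildeS

theorem spin_Dfun_formula_general (m n d : ℕ) [NeZero m] (hm : 2 ≤ m)
    (lam phi : Fin n → ℂ) (g : ZMod m → ℂ)
    (vt : ZMod m → Matrix (Fin n) (Fin d) ℂ) (wt : ZMod m → Matrix (Fin d) (Fin n) ℂ) (z : ℂ) :
    DfunS m n g lam phi (fun i => vt i * wt i) z =
      ∑ j : Fin n, (m : ℂ) * phi j * lam j * z ^ (m - 2) *
        ∏ l ∈ Finset.univ.erase j, (z ^ m - lam l ^ m) := by
  rw [DfunS, adjugate_smul_one_sub_Ltilde lam z hm, trace_QtildeS_mul_LtildeAdj g lam phi _ hm]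

/-- Spin case, `m ≥ 2`:
`D(z) = Σ_{j=1}^{n} m·φⱼ·λⱼ·z^{m−2}·∏_{ℓ≠j}(z^m − λ_ℓ^m)`. -/
theorem spin_Dfun_formula (m n d : ℕ) [NeZero m] (hm : 2 ≤ m) (hn : 0 < n) (hd : 0 < d)
    (lam phi : Fin n → ℂ) (g : ZMod m → ℂ)
    (hlam : ∀ j, lam j ≠ 0)
    (hsep : ∀ j k : Fin n, j ≠ k → lam j ^ m ≠ lam k ^ m)
    (vt : ZMod m → Matrix (Fin n) (Fin d) ℂ) (wt : ZMod m → Matrix (Fin d) (Fin n) ℂ)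
    (hV : ∀ j : Fin n, ∑ i : ZMod m, (vt i * wt i) j j = gAbs m g) (z : ℂ) :
    DfunS m n g lam phi (fun i => vt i * wt i) z =
      ∑ j : Fin n, (m : ℂ) * phi j * lam j * z ^ (m - 2) *
        ∏ l ∈ Finset.univ.erase j, (z ^ m - lam l ^ m) :=
  spin_Dfun_formula_general m n d hm lam phi g vt wt z
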